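/- If A_G is a maximum independent set of G and A_H is a maximum independent set of H, then A_G × A_H is a maximum independent set of the lexicographic product G∘H. -/

import Mathlib

open SimpleGraph

/-- The lexicographic product of simple graphs. -/
def SimpleGraph.lexProd {α β : Type*} (G : SimpleGraph α) (H : SimpleGraph β) :
    SimpleGraph (α × β) where
  Adj x y := G.Adj x.1 y.1 ∨ (x.1 = y.1 ∧ H.Adj x.2 y.2)
  symm := by
    constructor
    rintro ⟨g1, h1⟩ ⟨g2, h2⟩ (h | ⟨rfl, h⟩)
    · exact Or.inl h.symm
    · exact Or.inr ⟨rfl, h.symm⟩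
  loopless := by
    constructor
    rintro ⟨g, h⟩ (h' | ⟨-, h'⟩)
    · exact G.irrefl h'
    · exact H.irrefl h'

/-- A set of vertices is independent if its vertices are pairwise non-adjacent. -/
def SimpleGraph.IndepSet {α : Type*} (G : SimpleGraph α) (s : Set α) : Prop :=
  ∀ u ∈ s, ∀ v ∈ s, u ≠ v → ¬ G.Adj u v

/-- The independence number: the largest cardinality of an independent set. -/
noncomputable def SimpleGraph.indepNum' {α : Type*} [Fintype α] (G : SimpleGraph α) : ℕ :=
  sSup {n | ∃ s : Finset α, G.IndepSet ↑s ∧ s.card = n}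

/-- An `i`-packing: a set of vertices pairwise at distance greater than `i`. -/
def SimpleGraph.IsPacking {α : Type*} (G : SimpleGraph α) (i : ℕ) (s : Set α) : Prop :=
  ∀ u ∈ s, ∀ v ∈ s, u ≠ v → i < G.dist u v

/-- The `i`-packing number: the largest cardinality of an `i`-packing. -/
noncomputable def SimpleGraph.packingNum {α : Type*} [Fintype α] (G : SimpleGraph α)
    (i : ℕ) : ℕ :=
  sSup {n | ∃ s : Finset α, G.IsPacking i ↑s ∧ s.card = n}

/-- A `k`-packing coloring: colors in `{1, …, k}`, and any two distinct vertices sharing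
color `i` are at distance greater than `i`. -/
def SimpleGraph.IsPackingColoring {α : Type*} (G : SimpleGraph α) (k : ℕ) (c : α → ℕ) :
    Prop :=
  (∀ v, c v ∈ Finset.Icc 1 k) ∧ ∀ u v, u ≠ v → c u = c v → c u < G.dist u v

/-- The packing chromatic number: the least `k` admitting a `k`-packing coloring. -/
noncomputable def SimpleGraph.packingChromatic {α : Type*} (G : SimpleGraph α) : ℕ :=
  sInf {k | ∃ c : α → ℕ, G.IsPackingColoring k c}

/-- `d(G) = 1` if `G` is complete, and `diam(G) - 1` otherwise. -/
noncomputable def SimpleGraph.dval {α : Type*} [Fintype α] (G : SimpleGraph α) : ℕ :=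
  letI := Classical.dec (G = (⊤ : SimpleGraph α))
  if G = (⊤ : SimpleGraph α) then 1 else G.diam - 1

/-!
An independent set of `G ∘ H` projects onto an independent set of `G`, and each of its fibres
over a vertex of `G` is an independent set of `H`. Hence it has at most `α(G) α(H)` vertices,
while `A_G × A_H` is independent of exactly that size, so `α(G ∘ H) = α(G) α(H)`.
-/

open Finset

namespace SimpleGraph

variable {α β : Type*} {G : SimpleGraph α} {H : SimpleGraph β}

theorem IndepSet.mono {s t : Set α} (ht : G.IndepSet t) (hst : s ⊆ t) : G.IndepSet s :=
  fun u hu v hv => ht u (hst hu) v (hst hv)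

theorem IndepSet.lexProd {s : Set α} {t : Set β} (hs : G.IndepSet s) (ht : H.IndepSet t) :
    (G.lexProd H).IndepSet (s ×ˢ t) := by
  rintro ⟨a, x⟩ ⟨ha, hx⟩ ⟨b, y⟩ ⟨hb, hy⟩ hne (hab | ⟨rfl, hxy⟩)
  · exact hs a ha b hb (G.ne_of_adj hab) hab
  · exact ht x hx y hy (fun h => hne (h ▸ rfl)) hxy

theorem IndepSet.image_fst {u : Set (α × β)} (hu : (G.lexProd H).IndepSet u) :
    G.IndepSet (Prod.fst '' u) := by
  rintro _ ⟨x, hx, rfl⟩ _ ⟨y, hy, rfl⟩ hne hadj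
  exact hu x hx y hy (fun h => hne (h ▸ rfl)) (Or.inl hadj)

theorem IndepSet.preimage_mk {u : Set (α × β)} (hu : (G.lexProd H).IndepSet u) (a : α) :
    H.IndepSet (Prod.mk a ⁻¹' u) :=
  fun _ hx _ hy hne hadj => hu _ hx _ hy (fun h => hne (Prod.mk.inj h).2) (Or.inr ⟨rfl, hadj⟩)

variable [Fintype α]

theorem IndepSet.card_le_indepNum' {s : Finset α} (hs : G.IndepSet s) : #s ≤ G.indepNum' :=
  le_csSup ⟨Fintype.card α, by rintro _ ⟨u, -, rfl⟩; exact u.card_le_univ⟩ ⟨s, hs, rfl⟩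

variable (G) in
theorem exists_indepSet_card_eq_indepNum' :
    ∃ s : Finset α, G.IndepSet s ∧ #s = G.indepNum' :=
  Nat.sSup_mem (s := {n | ∃ s : Finset α, G.IndepSet ↑s ∧ #s = n})
    ⟨0, ∅, by simp [IndepSet]⟩
    ⟨Fintype.card α, by rintro _ ⟨u, -, rfl⟩; exact u.card_le_univ⟩

theorem IndepSet.card_le_indepNum'_mul [Fintype β] {u : Finset (α × β)}
    (hu : (G.lexProd H).IndepSet u) : #u ≤ G.indepNum' * H.indepNum' := by
  classical
  have hfibre (a : α) : #{x ∈ u | x.1 = a} ≤ H.indepNum' := by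
    have hinj : Set.InjOn Prod.snd (↑{x ∈ u | x.1 = a} : Set (α × β)) := by
      rintro ⟨a₁, b⟩ h₁ ⟨a₂, b⟩ h₂ rfl
      simp_all
    rw [← card_image_of_injOn hinj]
    refine IndepSet.card_le_indepNum' ((hu.preimage_mk a).mono ?_)
    intro b hb
    simp only [coe_image, coe_filter, Set.mem_image, Set.mem_ofPred_eq] at hb
    obtain ⟨⟨a', b⟩, ⟨hx, rfl⟩, rfl⟩ := hb
    exact hx
  have hbase : #(u.image Prod.fst) ≤ G.indepNum' :=
    IndepSet.card_le_indepNum' (by simpa using hu.image_fst)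
  calc #u ≤ H.indepNum' * #(u.image Prod.fst) := card_le_mul_card_image u _ fun a _ => hfibre a
    _ ≤ H.indepNum' * G.indepNum' := by gcongr
    _ = G.indepNum' * H.indepNum' := mul_comm _ _

theorem indepNum'_lexProd [Fintype β] :
    (G.lexProd H).indepNum' = G.indepNum' * H.indepNum' := by
  obtain ⟨u, hu, hu_card⟩ := (G.lexProd H).exists_indepSet_card_eq_indepNum'
  obtain ⟨s, hs, hs_card⟩ := G.exists_indepSet_card_eq_indepNum'
  obtain ⟨t, ht, ht_card⟩ := H.exists_indepSet_card_eq_indepNum'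
  apply le_antisymm
  · exact hu_card ▸ hu.card_le_indepNum'_mul
  · rw [← hs_card, ← ht_card, ← card_product]
    exact IndepSet.card_le_indepNum' (by simpa using hs.lexProd ht)

end SimpleGraph

theorem maxIndepSet_lexProd {α β : Type*} [Fintype α] [Fintype β]
    (G : SimpleGraph α) (H : SimpleGraph β) (s : Finset α) (t : Finset β)
    (hs : G.IndepSet ↑s) (hsc : s.card = G.indepNum')
    (ht : H.IndepSet ↑t) (htc : t.card = H.indepNum') :
    (G.lexProd H).IndepSet ↑(s ×ˢ t) ∧ (s ×ˢ t).card = (G.lexProd H).indepNum' := by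
  refine ⟨by simpa using hs.lexProd ht, ?_⟩
  rw [indepNum'_lexProd, card_product, hsc, htc]
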